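/- arXiv:1805.07209 — 7 statements merged into one kernel-verified Lean document; each statement's English description precedes it below -/
import Mathlib

section
/- Let α ≥ 2 and β ≥ 1 be integers, let R be an (α,β)-ruling edge set of a finite simple graph G = (V,E), and let s be a function assigning to each edge of R one of its two endpoints. Then the set S consisting of all chosen endpoints s(e) for e ∈ R together with all isolated vertices of G is an (α−1, β+1)-ruling set of G. -/
open SimpleGraph

/-- The line graph of `G` on the type `Sym2 V`: two distinct edges of `G` are adjacent
iff they share an endpoint. Elements of `Sym2 V` that are not edges of `G` are isolated. -/
def lineG {V : Type*} (G : SimpleGraph V) : SimpleGraph (Sym2 V) where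
  Adj e f := e ≠ f ∧ e ∈ G.edgeSet ∧ f ∈ G.edgeSet ∧ ∃ v, v ∈ e ∧ v ∈ f
  symm := by
    constructor
    rintro e f ⟨hne, he, hf, v, hv1, hv2⟩
    exact ⟨hne.symm, hf, he, v, hv2, hv1⟩
  loopless := by
    constructor
    rintro e ⟨h, -⟩
    exact h rfl

/-- Line-graph distance between two edges, `∞` if not connected. -/
noncomputable def edistE {V : Type*} (G : SimpleGraph V) (e f : Sym2 V) : ℕ∞ :=
  (lineG G).edist e f

/-- Line-graph distance from an edge to a set of edges; `∞` if the set is empty. -/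
noncomputable def edistSet {V : Type*} (G : SimpleGraph V) (e : Sym2 V)
    (R : Set (Sym2 V)) : ℕ∞ :=
  ⨅ f ∈ R, edistE G e f

/-- `R` is an `(α,β)`-ruling set of `G`: any two distinct nodes of `R` are at distance
at least `α` and every node is at distance at most `β` from some node of `R`. -/
def IsRulingSet {V : Type*} (G : SimpleGraph V) (α β : ℕ) (R : Set V) : Prop :=
  (∀ u ∈ R, ∀ v ∈ R, u ≠ v → (α : ℕ∞) ≤ G.edist u v) ∧
  (∀ v : V, ∃ u ∈ R, G.edist v u ≤ (β : ℕ∞))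

/-- `F` is an `(α,β)`-ruling edge set of `G`: `F` consists of edges of `G`, any two
distinct edges of `F` are at line-graph distance at least `α`, and every edge of `G`
is at line-graph distance at most `β` from some edge of `F`. -/
def IsRulingEdgeSet {V : Type*} (G : SimpleGraph V) (α β : ℕ) (F : Set (Sym2 V)) : Prop :=
  F ⊆ G.edgeSet ∧
  (∀ e ∈ F, ∀ f ∈ F, e ≠ f → (α : ℕ∞) ≤ edistE G e f) ∧
  (∀ e ∈ G.edgeSet, ∃ f ∈ F, edistE G e f ≤ (β : ℕ∞))

/-- `F` is a `(d,r)`-edge-kernel of `G`: every vertex is incident to at most `d`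
edges of `F` and every edge of `G` is at line-graph distance at most `r` from `F`. -/
def IsEdgeKernel {V : Type*} (G : SimpleGraph V) (d r : ℕ) (F : Set (Sym2 V)) : Prop :=
  F ⊆ G.edgeSet ∧
  (∀ v : V, {e ∈ F | v ∈ e}.ncard ≤ d) ∧
  (∀ e ∈ G.edgeSet, ∃ f ∈ F, edistE G e f ≤ (r : ℕ∞))

/-!
A walk of length `n` in the line graph from `e` to `f` yields a walk of length at most `n + 1`
in `G` between any endpoint of `e` and any endpoint of `f`, and conversely. Two distinct ruling
edges are at line-graph distance at least `α`, so their chosen endpoints are at distance at least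
`α - 1`; an edge at line-graph distance at most `β` from a ruling edge has its endpoints within
`β + 1` of the chosen endpoint. Isolated vertices are unreachable from everything else, so adding
them keeps the separation and covers the vertices that lie on no edge.
-/

section LineGraphDistance

variable {V : Type*} {G : SimpleGraph V}

lemma edist_le_one_of_mem_edgeSet {e : Sym2 V} (he : e ∈ G.edgeSet) {u v : V}
    (hu : u ∈ e) (hv : v ∈ e) : G.edist u v ≤ 1 := by
  by_cases huv : u = v
  · simp [huv]
  · rw [(Sym2.mem_and_mem_iff huv).mp ⟨hu, hv⟩] at he
    exact (edist_eq_one_iff_adj.mpr he).le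

lemma edistE_le_one_of_mem {e f : Sym2 V} (he : e ∈ G.edgeSet) (hf : f ∈ G.edgeSet) {v : V}
    (hve : v ∈ e) (hvf : v ∈ f) : edistE G e f ≤ 1 := by
  by_cases hef : e = f
  · simp [hef, edistE]
  · exact (edist_eq_one_iff_adj.mpr (show (lineG G).Adj e f from
      ⟨hef, he, hf, v, hve, hvf⟩)).le

lemma edist_le_length_lineG_walk_add_one {e f : Sym2 V} (p : (lineG G).Walk e f)
    (he : e ∈ G.edgeSet) {u v : V} (hu : u ∈ e) (hv : v ∈ f) :
    G.edist u v ≤ p.length + 1 := by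
  induction p generalizing u with
  | nil => simpa using edist_le_one_of_mem_edgeSet he hu hv
  | cons hadj q ih =>
    obtain ⟨-, -, he', w, hwe, hwe'⟩ := hadj
    calc G.edist u v ≤ G.edist u w + G.edist w v := SimpleGraph.edist_triangle
      _ ≤ 1 + (q.length + 1) :=
        add_le_add (edist_le_one_of_mem_edgeSet he hu hwe) (ih he' hwe' hv)
      _ = (q.length + 1 : ℕ) + 1 := by push_cast; ring

lemma edistE_le_length_walk_add_one {u v : V} (p : G.Walk u v) {e f : Sym2 V}
    (he : e ∈ G.edgeSet) (hf : f ∈ G.edgeSet) (hu : u ∈ e) (hv : v ∈ f) :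
    edistE G e f ≤ p.length + 1 := by
  induction p generalizing e with
  | nil => simpa using edistE_le_one_of_mem he hf hu hv
  | @cons u w v hadj q ih =>
    have he' : s(u, w) ∈ G.edgeSet := hadj
    calc edistE G e f ≤ edistE G e s(u, w) + edistE G s(u, w) f :=
        SimpleGraph.edist_triangle
      _ ≤ 1 + (q.length + 1) :=
        add_le_add (edistE_le_one_of_mem he he' hu (Sym2.mem_mk_left u w))
          (ih he' (Sym2.mem_mk_right u w) hv)
      _ = (q.length + 1 : ℕ) + 1 := by push_cast; ring

lemma edist_le_edistE_add_one {e f : Sym2 V} (he : e ∈ G.edgeSet) {u v : V}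
    (hu : u ∈ e) (hv : v ∈ f) : G.edist u v ≤ edistE G e f + 1 := by
  by_cases htop : edistE G e f = ⊤
  · simp [htop]
  · obtain ⟨p, hp⟩ := exists_walk_of_edist_ne_top htop
    rw [edistE, ← hp]
    exact edist_le_length_lineG_walk_add_one p he hu hv

lemma edistE_le_edist_add_one {e f : Sym2 V} (he : e ∈ G.edgeSet) (hf : f ∈ G.edgeSet)
    {u v : V} (hu : u ∈ e) (hv : v ∈ f) : edistE G e f ≤ G.edist u v + 1 := by
  by_cases htop : G.edist u v = ⊤
  · simp [htop]
  · obtain ⟨p, hp⟩ := exists_walk_of_edist_ne_top htop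
    rw [← hp]
    exact edistE_le_length_walk_add_one p he hf hu hv

lemma edist_eq_top_of_forall_not_adj {u v : V} (hu : ∀ w, ¬ G.Adj u w) (huv : u ≠ v) :
    G.edist u v = ⊤ := by
  refine edist_eq_top_of_not_reachable fun ⟨p⟩ => ?_
  cases p with
  | nil => exact huv rfl
  | cons hadj _ => exact hu _ hadj

end LineGraphDistance

section RulingEdgeSet

variable {V : Type*} {G : SimpleGraph V} {α β : ℕ} {R : Set (Sym2 V)}

lemma IsRulingEdgeSet.sub_one_le_edist (hR : IsRulingEdgeSet G α β R) {e f : Sym2 V}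
    (he : e ∈ R) (hf : f ∈ R) (hef : e ≠ f) {u v : V} (hu : u ∈ e) (hv : v ∈ f) :
    ((α - 1 : ℕ) : ℕ∞) ≤ G.edist u v := by
  rw [ENat.natCast_sub, Nat.cast_one, tsub_le_iff_right]
  exact (hR.2.1 e he f hf hef).trans (edistE_le_edist_add_one (hR.1 he) (hR.1 hf) hu hv)

lemma IsRulingEdgeSet.exists_edist_le_add_one (hR : IsRulingEdgeSet G α β R) {v w : V}
    (hvw : G.Adj v w) : ∃ f ∈ R, ∀ x ∈ f, G.edist v x ≤ (β + 1 : ℕ) := by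
  obtain ⟨f, hf, hdist⟩ := hR.2.2 s(v, w) hvw
  refine ⟨f, hf, fun x hx => ?_⟩
  calc G.edist v x ≤ edistE G s(v, w) f + 1 :=
        edist_le_edistE_add_one hvw (Sym2.mem_mk_left v w) hx
    _ ≤ β + 1 := by gcongr
    _ = (β + 1 : ℕ) := by push_cast; rfl

end RulingEdgeSet

theorem stmt0_general {V : Type*} (G : SimpleGraph V) (α β : ℕ)
    (R : Set (Sym2 V)) (hR : IsRulingEdgeSet G α β R)
    (s : Sym2 V → V) (hs : ∀ e ∈ R, s e ∈ e) :
    IsRulingSet G (α - 1) (β + 1)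
      ({v : V | ∃ e ∈ R, s e = v} ∪ {v : V | ∀ w : V, ¬ G.Adj v w}) := by
  constructor
  · rintro u (⟨e, he, rfl⟩ | hu) v hv huv
    · rcases hv with ⟨f, hf, rfl⟩ | hv
      · exact hR.sub_one_le_edist he hf (by rintro rfl; exact huv rfl) (hs e he) (hs f hf)
      · rw [edist_comm, edist_eq_top_of_forall_not_adj hv huv.symm]
        exact le_top
    · rw [edist_eq_top_of_forall_not_adj hu huv]
      exact le_top
  · intro v
    by_cases hv : ∃ w, G.Adj v w
    · obtain ⟨w, hvw⟩ := hv
      obtain ⟨f, hf, hdist⟩ := hR.exists_edist_le_add_one hvw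
      exact ⟨s f, Or.inl ⟨f, hf, rfl⟩, hdist _ (hs f hf)⟩
    · exact ⟨v, Or.inr (not_exists.mp hv), by simp⟩

/-- choosing one endpoint of each edge of an `(α,β)`-ruling edge set and
adding all isolated vertices yields an `(α-1, β+1)`-ruling set. -/
theorem stmt0 {V : Type*} [Fintype V] (G : SimpleGraph V) (α β : ℕ)
    (hα : 2 ≤ α) (hβ : 1 ≤ β)
    (R : Set (Sym2 V)) (hR : IsRulingEdgeSet G α β R)
    (s : Sym2 V → V) (hs : ∀ e ∈ R, s e ∈ e) :
    IsRulingSet G (α - 1) (β + 1)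
      ({v : V | ∃ e ∈ R, s e = v} ∪ {v : V | ∀ w : V, ¬ G.Adj v w}) :=
  stmt0_general G α β R hR s hs
end

section
/- Let β ≥ 3 be an integer, let G = (V,E) be a finite simple graph and let R be a β-ruling edge set of G. Let H be the spanning subgraph of G whose edge set is { e ∈ E : dist(e,R) ≤ 3 }, where dist is line-graph distance in G. If S is a 2-ruling edge set of H with R ⊆ S, then S is a (β−1)-ruling edge set of G. -/
open SimpleGraph

/-! Two edges of `S` share no vertex in `H`, hence none in `G`. An edge `e` at distance
`n ≤ β` from `R` has, on a geodesic to `R`, an edge at distance `n - 3` from `e` and `3` from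
`R`; that edge lies in `H`, so it is within `2` of `S`, and `e` is within `n - 1` of `S`. -/

namespace SimpleGraph

variable {α : Type*} {Γ : SimpleGraph α}

lemma exists_edist_le_and_edist_le_of_edist_le_add {u v : α} {m k : ℕ}
    (h : Γ.edist u v ≤ m + k) : ∃ w, Γ.edist u w ≤ m ∧ Γ.edist w v ≤ k := by
  obtain ⟨p, hp⟩ :=
    (reachable_of_edist_ne_top (ne_top_of_le_ne_top (by simp) h)).exists_walk_length_eq_edist
  have hlen : p.length ≤ m + k := by exact_mod_cast hp ▸ h
  refine ⟨p.getVert m, (p.take m).edist_le.trans ?_, (p.drop m).edist_le.trans ?_⟩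
  · simp
  · simp only [Walk.drop_length, Nat.cast_le]
    omega

lemma exists_edist_le_sub_add {S : Set α} {u r : α} {n a b : ℕ} (hur : Γ.edist u r ≤ n)
    (hS : ∀ w, Γ.edist w r ≤ a → ∃ s ∈ S, Γ.edist w s ≤ b) :
    ∃ s ∈ S, Γ.edist u s ≤ (n - a + b : ℕ) := by
  obtain ⟨w, huw, hwr⟩ := exists_edist_le_and_edist_le_of_edist_le_add (m := n - a) (k := a)
    (hur.trans (by exact_mod_cast (by omega : n ≤ n - a + a)))
  obtain ⟨s, hs, hws⟩ := hS w hwr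
  refine ⟨s, hs, ?_⟩
  calc Γ.edist u s ≤ Γ.edist u w + Γ.edist w s := Γ.edist_triangle
    _ ≤ (n - a : ℕ) + b := add_le_add huw hws
    _ = (n - a + b : ℕ) := by push_cast; rfl

end SimpleGraph

section LineGraph

variable {V : Type*} {G H : SimpleGraph V}

lemma lineG_mono (hle : H ≤ G) : lineG H ≤ lineG G := by
  rintro e f ⟨hne, he, hf, hv⟩
  exact ⟨hne, edgeSet_mono hle he, edgeSet_mono hle hf, hv⟩

lemma edistE_anti (hle : H ≤ G) {e f : Sym2 V} : edistE G e f ≤ edistE H e f :=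
  edist_anti (lineG_mono hle)

lemma two_le_edistE_of_mem_edgeSet {e f : Sym2 V} (he : e ∈ H.edgeSet)
    (hf : f ∈ H.edgeSet) (h : 2 ≤ edistE H e f) : 2 ≤ edistE G e f := by
  unfold edistE at *
  by_contra! hlt
  have hGle : (lineG G).edist e f ≤ 1 := Order.le_of_lt_add_one hlt
  have hHle : (lineG H).edist e f ≤ 1 := by
    rcases edist_le_one_iff_adj_or_eq.mp hGle with ⟨hne, -, -, hv⟩ | rfl
    · exact (edist_eq_one_iff_adj (G := lineG H)).mpr ⟨hne, he, hf, hv⟩ |>.le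
    · exact edist_self.trans_le zero_le_one
  exact absurd (h.trans hHle) (by decide)

lemma mem_edgeSet_of_edistE_ne_top {e f : Sym2 V} (hf : f ∈ G.edgeSet)
    (h : edistE G e f ≠ ⊤) : e ∈ G.edgeSet := by
  obtain ⟨p, -⟩ := exists_walk_of_edist_ne_top h
  cases p with
  | nil => exact hf
  | cons hadj _ => exact hadj.2.1

end LineGraph

theorem stmt6_general {V : Type*} (G : SimpleGraph V) (β : ℕ) (hβ : 3 ≤ β)
    (R : Set (Sym2 V)) (hR : IsRulingEdgeSet G 2 β R)
    (S : Set (Sym2 V))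
    (hS : IsRulingEdgeSet
      (SimpleGraph.fromEdgeSet {e ∈ G.edgeSet | edistSet G e R ≤ (3 : ℕ∞)}) 2 2 S) :
    IsRulingEdgeSet G 2 (β - 1) S := by
  set H := SimpleGraph.fromEdgeSet {e ∈ G.edgeSet | edistSet G e R ≤ (3 : ℕ∞)}
  have hHG : H ≤ G := G.fromEdgeSet_le.mpr fun e he => he.1.1
  obtain ⟨hSH, hSsep, hScov⟩ := hS
  refine ⟨hSH.trans (edgeSet_mono hHG), fun e he f hf hef =>
    two_le_edistE_of_mem_edgeSet (hSH he) (hSH hf) (hSsep e he f hf hef), fun e he => ?_⟩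
  obtain ⟨r, hr, her⟩ := hR.2.2 e he
  obtain ⟨s, hs, hes⟩ := exists_edist_le_sub_add (a := 3) (b := 2) her fun w hw => by
    have hwG := mem_edgeSet_of_edistE_ne_top (hR.1 hr) (ne_top_of_le_ne_top (by decide) hw)
    have hwH : w ∈ H.edgeSet := by
      rw [edgeSet_fromEdgeSet]
      exact ⟨⟨hwG, (iInf₂_le r hr).trans hw⟩, G.not_isDiag_of_mem_edgeSet hwG⟩
    obtain ⟨s, hs, hws⟩ := hScov w hwH
    exact ⟨s, hs, (edistE_anti hHG).trans hws⟩
  exact ⟨s, hs, hes.trans_eq (by congr 1; omega)⟩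

/-- if `R` is a `β`-ruling edge set of `G` (`β ≥ 3`), `H` is the spanning
subgraph of `G` on the edges at line-graph distance (in `G`) at most `3` from `R`, and
`S ⊇ R` is a `2`-ruling edge set of `H`, then `S` is a `(β-1)`-ruling edge set of `G`. -/
theorem stmt6 {V : Type*} [Fintype V] (G : SimpleGraph V) (β : ℕ) (hβ : 3 ≤ β)
    (R : Set (Sym2 V)) (hR : IsRulingEdgeSet G 2 β R)
    (S : Set (Sym2 V)) (hRS : R ⊆ S)
    (hS : IsRulingEdgeSet
      (SimpleGraph.fromEdgeSet {e ∈ G.edgeSet | edistSet G e R ≤ (3 : ℕ∞)}) 2 2 S) :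
    IsRulingEdgeSet G 2 (β - 1) S :=
  stmt6_general G β hβ R hR S hS
end

section
/- Let G = (V,E) be a finite simple graph, let Q be a clique edge cover of G of diversity at most d, and let P ⊆ V be a set of vertices with |P ∩ C| ≤ d for every clique C ∈ Q. Then every vertex of P has at most d(d−1) neighbors in P; i.e., the subgraph of G induced by P has maximum degree at most d(d−1) ≤ d². -/
open SimpleGraph

/-- `Q` is a clique edge cover of `H`: every member of `Q` is a clique of `H`, every
vertex lies in some clique of `Q`, and both endpoints of every edge lie in a common
clique of `Q`. -/
def IsCliqueEdgeCover {W : Type*} (H : SimpleGraph W) (Q : Set (Set W)) : Prop :=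
  (∀ C ∈ Q, H.IsClique C) ∧
  (∀ w : W, ∃ C ∈ Q, w ∈ C) ∧
  (∀ u w : W, H.Adj u w → ∃ C ∈ Q, u ∈ C ∧ w ∈ C)

lemma Set.Finite.ncard_biUnion_le_mul {ι α : Type*} {t : Set ι} (ht : t.Finite)
    {s : ι → Set α} {b : ℕ} (hs : ∀ i ∈ t, (s i).ncard ≤ b) :
    (⋃ i ∈ t, s i).ncard ≤ t.ncard * b := by
  calc (⋃ i ∈ t, s i).ncard ≤ ∑ i ∈ ht.toFinset, (s i).ncard := by
        simpa using ht.toFinset.set_ncard_biUnion_le s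
    _ ≤ ht.toFinset.card * b :=
        Finset.sum_le_card_nsmul _ _ _ fun i hi => hs i (ht.mem_toFinset.mp hi)
    _ = t.ncard * b := by rw [Set.ncard_eq_toFinset_card t ht]

lemma IsCliqueEdgeCover.setOf_adj_subset_biUnion {W : Type*} {H : SimpleGraph W}
    {Q : Set (Set W)} (hQ : IsCliqueEdgeCover H Q) (P : Set W) (v : W) :
    {u ∈ P | H.Adj v u} ⊆ ⋃ C ∈ {C ∈ Q | v ∈ C}, (P ∩ C) \ {v} := by
  rintro u ⟨huP, hvu⟩
  obtain ⟨C, hCQ, hvC, huC⟩ := hQ.2.2 v u hvu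
  exact Set.mem_biUnion ⟨hCQ, hvC⟩ ⟨⟨huP, huC⟩, hvu.ne'⟩

/-- if `Q` is a clique edge cover of diversity at most `d` and `P` contains
at most `d` vertices of each clique of `Q`, then every vertex of `P` has at most
`d(d-1)` neighbors in `P`. -/
theorem stmt8 {V : Type*} [Fintype V] (G : SimpleGraph V)
    (Q : Set (Set V)) (d : ℕ)
    (hQ : IsCliqueEdgeCover G Q)
    (hdiv : ∀ v : V, {C ∈ Q | v ∈ C}.ncard ≤ d)
    (P : Set V) (hP : ∀ C ∈ Q, (P ∩ C).ncard ≤ d) :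
    ∀ v ∈ P, {u ∈ P | G.Adj v u}.ncard ≤ d * (d - 1) := by
  intro v hv
  have hclique_rest : ∀ C ∈ {C ∈ Q | v ∈ C}, ((P ∩ C) \ {v}).ncard ≤ d - 1 := by
    rintro C ⟨hCQ, hvC⟩
    rw [Set.ncard_sdiff_singleton_of_mem (Set.mem_inter hv hvC)]
    exact Nat.sub_le_sub_right (hP C hCQ) 1
  calc {u ∈ P | G.Adj v u}.ncard
      ≤ (⋃ C ∈ {C ∈ Q | v ∈ C}, (P ∩ C) \ {v}).ncard :=
        Set.ncard_le_ncard (hQ.setOf_adj_subset_biUnion P v)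
    _ ≤ {C ∈ Q | v ∈ C}.ncard * (d - 1) :=
        (Set.toFinite _).ncard_biUnion_le_mul hclique_rest
    _ ≤ d * (d - 1) := Nat.mul_le_mul_right _ (hdiv v)
end

section
/- Let G = (V,E) be a finite simple graph and Q a clique edge cover of G of diversity at most d, where d ≥ 1. Consider any execution of the following d-phase process. Initially P₀ = V and R₀^C = ∅ for every clique C ∈ Q. In each phase i = 1,…,d: for every clique C ∈ Q with (P_{i−1} ∩ C) \ R_{i−1}^C nonempty, a node p_i^C is chosen from (P_{i−1} ∩ C) \ R_{i−1}^C; S_i is the set of all nodes chosen in phase i; R_i^C = R_{i−1}^C ∪ {p_i^C} for cliques C that chose a node and R_i^C = R_{i−1}^C otherwise; and P_i = S_i ∪ { v ∈ P_{i−1} : no neighbor of v lies in S_i }. Then the final set P_d satisfies: (a) |P_d ∩ C| ≤ d for every clique C ∈ Q, and (b) every vertex of G is at distance at most d from some vertex of P_d. In particular, P_d is a (d(d−1), d)-vertex-kernel of G. -/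
/-!
A node that survives phase `i` inside a clique `C` that proposed in that phase must itself have
been proposed, since every other member of `C` is adjacent to `C`'s proposal. So a node `x` of
`P d ∩ C` that `C` never proposed was proposed in each of the `d` phases, each time by a
different clique containing `x` (a clique never proposes the same node twice), and `C` is yet
another one, against diversity `≤ d`. Hence `P d ∩ C ⊆ R_d^C`, which has at most `d` elements.
Domination holds because a node leaves `P` only when a neighbour enters it, and the degree bound
follows by covering the neighbourhood of `v` with the at most `d` cliques through `v`.
-/

open SimpleGraph

/-- The `d`-phase process, indexed so that phase `i + 1` reads the state after phase `i`
(no truncated `i - 1`); `Rc i C` is `R_i^C` and `p (i + 1) C` is `p_{i+1}^C`. -/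
structure IsProposalProcess {V : Type*} (G : SimpleGraph V) (Q : Set (Set V)) (d : ℕ)
    (P S : ℕ → Set V) (Rc : ℕ → Set V → Set V) (p : ℕ → Set V → V) : Prop where
  P_zero : P 0 = Set.univ
  Rc_zero : ∀ C ∈ Q, Rc 0 C = ∅
  p_mem : ∀ i < d, ∀ C ∈ Q, ((P i ∩ C) \ Rc i C).Nonempty →
    p (i + 1) C ∈ (P i ∩ C) \ Rc i C
  S_eq : ∀ i < d,
    S (i + 1) = {x | ∃ C ∈ Q, ((P i ∩ C) \ Rc i C).Nonempty ∧ p (i + 1) C = x}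
  Rc_succ_of_nonempty : ∀ i < d, ∀ C ∈ Q, ((P i ∩ C) \ Rc i C).Nonempty →
    Rc (i + 1) C = Rc i C ∪ {p (i + 1) C}
  Rc_succ_of_not_nonempty : ∀ i < d, ∀ C ∈ Q, ¬ ((P i ∩ C) \ Rc i C).Nonempty →
    Rc (i + 1) C = Rc i C
  P_succ : ∀ i < d, P (i + 1) = S (i + 1) ∪ {v ∈ P i | ∀ u, G.Adj v u → u ∉ S (i + 1)}

namespace IsProposalProcess

variable {V : Type*} {G : SimpleGraph V} {Q : Set (Set V)} {d : ℕ} {P S : ℕ → Set V}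
  {Rc : ℕ → Set V → Set V} {p : ℕ → Set V → V} {C : Set V} {i j k : ℕ} {v x : V}

theorem S_subset (h : IsProposalProcess G Q d P S Rc p) (hi : i < d) : S (i + 1) ⊆ P i := by
  rw [h.S_eq i hi]
  rintro _ ⟨C, hC, hne, rfl⟩
  exact (h.p_mem i hi C hC hne).1.1

theorem P_succ_subset (h : IsProposalProcess G Q d P S Rc p) (hi : i < d) :
    P (i + 1) ⊆ P i := by
  rw [h.P_succ i hi]
  exact Set.union_subset (h.S_subset hi) (Set.sep_subset _ _)

theorem P_subset_of_le (h : IsProposalProcess G Q d P S Rc p) (hij : i ≤ j) (hj : j ≤ d) :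
    P j ⊆ P i := by
  induction j, hij using Nat.le_induction with
  | base => exact subset_rfl
  | succ j _ ih => exact (h.P_succ_subset hj).trans (ih (by omega))

theorem Rc_subset_succ (h : IsProposalProcess G Q d P S Rc p) (hi : i < d) (hC : C ∈ Q) :
    Rc i C ⊆ Rc (i + 1) C := by
  by_cases hne : ((P i ∩ C) \ Rc i C).Nonempty
  · rw [h.Rc_succ_of_nonempty i hi C hC hne]
    exact Set.subset_union_left
  · rw [h.Rc_succ_of_not_nonempty i hi C hC hne]

theorem Rc_subset_of_le (h : IsProposalProcess G Q d P S Rc p) (hC : C ∈ Q) (hij : i ≤ j)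
    (hj : j ≤ d) : Rc i C ⊆ Rc j C := by
  induction j, hij using Nat.le_induction with
  | base => exact subset_rfl
  | succ j _ ih => exact (ih (by omega)).trans (h.Rc_subset_succ hj hC)

theorem ncard_Rc_le [Finite V] (h : IsProposalProcess G Q d P S Rc p) (hC : C ∈ Q)
    (hi : i ≤ d) : (Rc i C).ncard ≤ i := by
  induction i with
  | zero => simp [h.Rc_zero C hC]
  | succ i ih =>
    by_cases hne : ((P i ∩ C) \ Rc i C).Nonempty
    · rw [h.Rc_succ_of_nonempty i hi C hC hne]
      exact (Set.ncard_union_le _ _).trans (by simpa using ih (by omega))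
    · rw [h.Rc_succ_of_not_nonempty i hi C hC hne]
      exact (ih (by omega)).trans i.le_succ

theorem mem_S_of_mem_P_succ (h : IsProposalProcess G Q d P S Rc p)
    (hclique : ∀ C ∈ Q, G.IsClique C) (hi : i < d) (hC : C ∈ Q)
    (hne : ((P i ∩ C) \ Rc i C).Nonempty) (hx : x ∈ P (i + 1)) (hxC : x ∈ C) :
    x ∈ S (i + 1) := by
  have hpS : p (i + 1) C ∈ S (i + 1) := by
    rw [h.S_eq i hi]
    exact ⟨C, hC, hne, rfl⟩
  rw [h.P_succ i hi] at hx
  rcases hx with hx | ⟨-, hx⟩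
  · exact hx
  · by_cases hxp : x = p (i + 1) C
    · exact hxp ▸ hpS
    · exact absurd hpS (hx _ (hclique C hC hxC (h.p_mem i hi C hC hne).1.2 hxp))

theorem le_ncard_setOf_mem_Rc [Finite V] (h : IsProposalProcess G Q d P S Rc p)
    (hclique : ∀ C ∈ Q, G.IsClique C) (hC : C ∈ Q) (hx : x ∈ P d) (hxC : x ∈ C)
    (hxR : x ∉ Rc d C) (hi : i ≤ d) : i ≤ {C' ∈ Q | x ∈ C' ∧ x ∈ Rc i C'}.ncard := by
  induction i with
  | zero => exact Nat.zero_le _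
  | succ i ih =>
    have hxPi := h.P_subset_of_le (by omega : i + 1 ≤ d) le_rfl hx
    have hne : ((P i ∩ C) \ Rc i C).Nonempty :=
      ⟨x, ⟨h.P_succ_subset hi hxPi, hxC⟩,
        fun hxRi => hxR (h.Rc_subset_of_le hC (by omega) le_rfl hxRi)⟩
    have hxS := h.mem_S_of_mem_P_succ hclique hi hC hne hxPi hxC
    rw [h.S_eq i hi] at hxS
    obtain ⟨C', hC', hne', hpx⟩ := hxS
    have hmem := h.p_mem i hi C' hC' hne'
    rw [hpx] at hmem
    obtain ⟨⟨-, hxC'⟩, hxR'⟩ := hmem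
    have hsub : insert C' {C'' ∈ Q | x ∈ C'' ∧ x ∈ Rc i C''} ⊆
        {C'' ∈ Q | x ∈ C'' ∧ x ∈ Rc (i + 1) C''} := by
      rintro C'' (rfl | ⟨hC'', hxC'', hxR''⟩)
      · refine ⟨hC', hxC', ?_⟩
        rw [h.Rc_succ_of_nonempty i hi C'' hC' hne', hpx]
        exact Or.inr rfl
      · exact ⟨hC'', hxC'', h.Rc_subset_succ hi hC'' hxR''⟩
    calc i + 1 ≤ {C'' ∈ Q | x ∈ C'' ∧ x ∈ Rc i C''}.ncard + 1 := by
          have := ih (by omega)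
          omega
      _ = (insert C' {C'' ∈ Q | x ∈ C'' ∧ x ∈ Rc i C''}).ncard :=
          (Set.ncard_insert_of_notMem fun hmem => hxR' hmem.2.2).symm
      _ ≤ _ := Set.ncard_le_ncard hsub

theorem inter_subset_Rc [Finite V] (h : IsProposalProcess G Q d P S Rc p)
    (hclique : ∀ C ∈ Q, G.IsClique C) (hdiv : ∀ v, {C ∈ Q | v ∈ C}.ncard ≤ d) (hC : C ∈ Q) :
    P d ∩ C ⊆ Rc d C := by
  rintro x ⟨hx, hxC⟩
  by_contra hxR
  have hsub : insert C {C' ∈ Q | x ∈ C' ∧ x ∈ Rc d C'} ⊆ {C' ∈ Q | x ∈ C'} := by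
    rintro C' (rfl | ⟨hC', hxC', -⟩)
    exacts [⟨hC, hxC⟩, ⟨hC', hxC'⟩]
  have hcard := Set.ncard_le_ncard hsub
  rw [Set.ncard_insert_of_notMem fun hmem => hxR hmem.2.2] at hcard
  have := h.le_ncard_setOf_mem_Rc hclique hC hx hxC hxR le_rfl
  have := hdiv x
  omega

theorem ncard_inter_le [Finite V] (h : IsProposalProcess G Q d P S Rc p)
    (hclique : ∀ C ∈ Q, G.IsClique C) (hdiv : ∀ v, {C ∈ Q | v ∈ C}.ncard ≤ d) (hC : C ∈ Q) :
    (P d ∩ C).ncard ≤ d :=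
  (Set.ncard_le_ncard (h.inter_subset_Rc hclique hdiv hC)).trans (h.ncard_Rc_le hC le_rfl)

theorem exists_mem_P_succ_edist_le_one (h : IsProposalProcess G Q d P S Rc p) (hi : i < d)
    (hv : v ∈ P i) : ∃ u ∈ P (i + 1), G.edist v u ≤ 1 := by
  by_cases hv' : v ∈ P (i + 1)
  · exact ⟨v, hv', by simp⟩
  · rw [h.P_succ i hi] at hv'
    simp only [Set.mem_union, Set.mem_sep_iff, not_or, not_and, not_forall, not_not] at hv'
    obtain ⟨u, hadj, hu⟩ := hv'.2 hv
    refine ⟨u, ?_, (edist_eq_one_iff_adj.mpr hadj).le⟩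
    rw [h.P_succ i hi]
    exact Or.inl hu

theorem exists_mem_P_edist_le (h : IsProposalProcess G Q d P S Rc p) (hk : k ≤ d)
    (hv : v ∈ P (d - k)) : ∃ u ∈ P d, G.edist v u ≤ k := by
  induction k generalizing v with
  | zero => exact ⟨v, hv, by simp⟩
  | succ k ih =>
    obtain ⟨w, hw, hvw⟩ := h.exists_mem_P_succ_edist_le_one (by omega) hv
    rw [show d - (k + 1) + 1 = d - k by omega] at hw
    obtain ⟨u, hu, hwu⟩ := ih (by omega) hw
    refine ⟨u, hu, ?_⟩
    calc G.edist v u ≤ G.edist v w + G.edist w u := G.edist_triangle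
      _ ≤ 1 + k := add_le_add hvw hwu
      _ = (k + 1 : ℕ) := by push_cast; ring

end IsProposalProcess

theorem ncard_setOf_adj_le_mul {V : Type*} [Finite V] {G : SimpleGraph V} {Q : Set (Set V)}
    {A : Set V} {k m : ℕ} (hcover : ∀ u w, G.Adj u w → ∃ C ∈ Q, u ∈ C ∧ w ∈ C)
    (hdiv : ∀ v, {C ∈ Q | v ∈ C}.ncard ≤ k) (hA : ∀ C ∈ Q, (A ∩ C).ncard ≤ m) {v : V}
    (hv : v ∈ A) : {u ∈ A | G.Adj v u}.ncard ≤ k * (m - 1) := by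
  set Qv := (Set.toFinite {C ∈ Q | v ∈ C}).toFinset
  have hsub : {u ∈ A | G.Adj v u} ⊆ ⋃ C ∈ Qv, (A ∩ C) \ {v} := by
    rintro u ⟨hu, hadj⟩
    obtain ⟨C, hC, hvC, huC⟩ := hcover v u hadj
    exact Set.mem_biUnion (by simpa [Qv] using ⟨hC, hvC⟩) ⟨⟨hu, huC⟩, hadj.ne'⟩
  calc {u ∈ A | G.Adj v u}.ncard
      ≤ (⋃ C ∈ Qv, (A ∩ C) \ {v}).ncard := Set.ncard_le_ncard hsub
    _ ≤ ∑ C ∈ Qv, ((A ∩ C) \ {v}).ncard := Finset.set_ncard_biUnion_le _ _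
    _ ≤ ∑ _C ∈ Qv, (m - 1) := Finset.sum_le_sum fun C hC => by
        simp only [Qv, Set.Finite.mem_toFinset, Set.mem_ofPred_eq] at hC
        rw [Set.ncard_sdiff_singleton_of_mem (show v ∈ A ∩ C from ⟨hv, hC.2⟩)]
        exact Nat.sub_le_sub_right (hA C hC.1) 1
    _ = {C ∈ Q | v ∈ C}.ncard * (m - 1) := by
        rw [Finset.sum_const, smul_eq_mul, ← Set.ncard_eq_toFinset_card]
    _ ≤ k * (m - 1) := Nat.mul_le_mul_right _ (hdiv v)

theorem stmt9_general {V : Type*} [Fintype V] (G : SimpleGraph V)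
    (Q : Set (Set V)) (d : ℕ)
    (hQ : IsCliqueEdgeCover G Q)
    (hdiv : ∀ v : V, {C ∈ Q | v ∈ C}.ncard ≤ d)
    (P S : ℕ → Set V) (Rc : ℕ → Set V → Set V) (p : ℕ → Set V → V)
    (hP0 : P 0 = Set.univ)
    (hRc0 : ∀ C ∈ Q, Rc 0 C = ∅)
    (hp : ∀ i, 1 ≤ i → i ≤ d → ∀ C ∈ Q,
      ((P (i - 1) ∩ C) \ Rc (i - 1) C).Nonempty →
        p i C ∈ (P (i - 1) ∩ C) \ Rc (i - 1) C)
    (hS : ∀ i, 1 ≤ i → i ≤ d →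
      S i = {x : V | ∃ C ∈ Q, ((P (i - 1) ∩ C) \ Rc (i - 1) C).Nonempty ∧ p i C = x})
    (hRc1 : ∀ i, 1 ≤ i → i ≤ d → ∀ C ∈ Q,
      ((P (i - 1) ∩ C) \ Rc (i - 1) C).Nonempty →
        Rc i C = Rc (i - 1) C ∪ {p i C})
    (hRc2 : ∀ i, 1 ≤ i → i ≤ d → ∀ C ∈ Q,
      ¬ ((P (i - 1) ∩ C) \ Rc (i - 1) C).Nonempty →
        Rc i C = Rc (i - 1) C)
    (hPi : ∀ i, 1 ≤ i → i ≤ d →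
      P i = S i ∪ {v ∈ P (i - 1) | ∀ u : V, G.Adj v u → u ∉ S i}) :
    (∀ C ∈ Q, (P d ∩ C).ncard ≤ d) ∧
    (∀ v : V, ∃ u ∈ P d, G.edist v u ≤ (d : ℕ∞)) ∧
    (∀ v ∈ P d, {u ∈ P d | G.Adj v u}.ncard ≤ d * (d - 1)) := by
  have hproc : IsProposalProcess G Q d P S Rc p :=
    { P_zero := hP0
      Rc_zero := hRc0
      p_mem := fun i hi => hp (i + 1) (by omega) hi
      S_eq := fun i hi => hS (i + 1) (by omega) hi
      Rc_succ_of_nonempty := fun i hi => hRc1 (i + 1) (by omega) hi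
      Rc_succ_of_not_nonempty := fun i hi => hRc2 (i + 1) (by omega) hi
      P_succ := fun i hi => hPi (i + 1) (by omega) hi }
  have hcard := fun C (hC : C ∈ Q) => hproc.ncard_inter_le hQ.1 hdiv hC
  refine ⟨hcard, fun v => hproc.exists_mem_P_edist_le le_rfl ?_,
    fun v hv => ncard_setOf_adj_le_mul hQ.2.2 hdiv hcard hv⟩
  simp [hP0]

/-- the `d`-phase proposal process on a graph with a clique edge cover of
diversity at most `d` produces a set `P d` with at most `d` nodes in each clique that
dominates every vertex within distance `d`; in particular `P d` is a
`(d(d-1), d)`-vertex-kernel. -/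
theorem stmt9 {V : Type*} [Fintype V] (G : SimpleGraph V)
    (Q : Set (Set V)) (d : ℕ) (hd : 1 ≤ d)
    (hQ : IsCliqueEdgeCover G Q)
    (hdiv : ∀ v : V, {C ∈ Q | v ∈ C}.ncard ≤ d)
    (P S : ℕ → Set V) (Rc : ℕ → Set V → Set V) (p : ℕ → Set V → V)
    (hP0 : P 0 = Set.univ)
    (hRc0 : ∀ C ∈ Q, Rc 0 C = ∅)
    (hp : ∀ i, 1 ≤ i → i ≤ d → ∀ C ∈ Q,
      ((P (i - 1) ∩ C) \ Rc (i - 1) C).Nonempty →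
        p i C ∈ (P (i - 1) ∩ C) \ Rc (i - 1) C)
    (hS : ∀ i, 1 ≤ i → i ≤ d →
      S i = {x : V | ∃ C ∈ Q, ((P (i - 1) ∩ C) \ Rc (i - 1) C).Nonempty ∧ p i C = x})
    (hRc1 : ∀ i, 1 ≤ i → i ≤ d → ∀ C ∈ Q,
      ((P (i - 1) ∩ C) \ Rc (i - 1) C).Nonempty →
        Rc i C = Rc (i - 1) C ∪ {p i C})
    (hRc2 : ∀ i, 1 ≤ i → i ≤ d → ∀ C ∈ Q,
      ¬ ((P (i - 1) ∩ C) \ Rc (i - 1) C).Nonempty →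
        Rc i C = Rc (i - 1) C)
    (hPi : ∀ i, 1 ≤ i → i ≤ d →
      P i = S i ∪ {v ∈ P (i - 1) | ∀ u : V, G.Adj v u → u ∉ S i}) :
    (∀ C ∈ Q, (P d ∩ C).ncard ≤ d) ∧
    (∀ v : V, ∃ u ∈ P d, G.edist v u ≤ (d : ℕ∞)) ∧
    (∀ v ∈ P d, {u ∈ P d | G.Adj v u}.ncard ≤ d * (d - 1)) :=
  stmt9_general G Q d hQ hdiv P S Rc p hP0 hRc0 hp hS hRc1 hRc2 hPi
end

section
/- Let G = (V,E) be a finite simple graph and Q a clique edge cover of G of diversity at most d, where d ≥ 1. Consider any execution of the following d-phase process. Initially P₀ = V and R₀^C = ∅ for every clique C ∈ Q. In each phase i = 1,…,d: for every clique C ∈ Q with (P_{i−1} ∩ C) \ R_{i−1}^C nonempty, a node p_i^C is chosen from (P_{i−1} ∩ C) \ R_{i−1}^C; S_i is the set of all nodes chosen in phase i; R_i^C = R_{i−1}^C ∪ {p_i^C} for cliques C that chose a node and R_i^C = R_{i−1}^C otherwise; and P_i = S_i ∪ { v ∈ P_{i−1} : no neighbor of v lies in S_i }. Then the sets of chosen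 nodes are nested: S₁ ⊇ S₂ ⊇ … ⊇ S_d. -/
/-!
A node `x` proposed by a clique `C` in phase `i + 1` was available to `C` after phase `i`. If `x`
was not proposed in phase `i`, it survived that phase, so it has no neighbour among the proposed
nodes. Were `C` active in phase `i`, its own proposal would be such a neighbour (or `x` itself);
were `C` idle, its set of used nodes did not change, so `x` was already available to `C` before
phase `i`, contradicting idleness.
-/

open SimpleGraph

namespace SimpleGraph

variable {V : Type*} {G : SimpleGraph V}

theorem IsClique.mem_of_forall_not_adj {C S : Set V} (hC : G.IsClique C)
    (hCS : (C ∩ S).Nonempty) {x : V} (hx : x ∈ C) (hno : ∀ u, G.Adj x u → u ∉ S) : x ∈ S := by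
  obtain ⟨y, hyC, hyS⟩ := hCS
  by_cases hxy : x = y
  · exact hxy ▸ hyS
  · exact absurd hyS (hno y (hC hx hyC hxy))

/-- One phase of the proposal process, seen from a single clique `C`: `P`, `R` are the
participating nodes and the nodes `C` has used before the phase, `P'`, `R'` after it, and `S` the
nodes proposed in it. -/
theorem IsClique.diff_subset_proposed {C P P' S R R' : Set V} (hC : G.IsClique C)
    (hpropose : ((P ∩ C) \ R).Nonempty → (C ∩ S).Nonempty)
    (hidle : ¬ ((P ∩ C) \ R).Nonempty → R' = R)
    (hP' : P' ⊆ S ∪ {v ∈ P | ∀ u, G.Adj v u → u ∉ S}) :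
    (P' ∩ C) \ R' ⊆ S := by
  rintro x ⟨⟨hxP', hxC⟩, hxR'⟩
  rcases hP' hxP' with hxS | ⟨hxP, hno⟩
  · exact hxS
  by_cases hactive : ((P ∩ C) \ R).Nonempty
  · exact hC.mem_of_forall_not_adj (hpropose hactive) hxC hno
  · exact absurd ⟨x, ⟨hxP, hxC⟩, hidle hactive ▸ hxR'⟩ hactive

end SimpleGraph

theorem stmt10_general {V : Type*} (G : SimpleGraph V)
    (Q : Set (Set V)) (d : ℕ)
    (hQ : IsCliqueEdgeCover G Q)
    (P S : ℕ → Set V) (Rc : ℕ → Set V → Set V) (p : ℕ → Set V → V)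
    (hp : ∀ i, 1 ≤ i → i ≤ d → ∀ C ∈ Q,
      ((P (i - 1) ∩ C) \ Rc (i - 1) C).Nonempty →
        p i C ∈ (P (i - 1) ∩ C) \ Rc (i - 1) C)
    (hS : ∀ i, 1 ≤ i → i ≤ d →
      S i = {x : V | ∃ C ∈ Q, ((P (i - 1) ∩ C) \ Rc (i - 1) C).Nonempty ∧ p i C = x})
    (hRc2 : ∀ i, 1 ≤ i → i ≤ d → ∀ C ∈ Q,
      ¬ ((P (i - 1) ∩ C) \ Rc (i - 1) C).Nonempty →
        Rc i C = Rc (i - 1) C)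
    (hPi : ∀ i, 1 ≤ i → i ≤ d →
      P i = S i ∪ {v ∈ P (i - 1) | ∀ u : V, G.Adj v u → u ∉ S i}) :
    ∀ i, 1 ≤ i → i + 1 ≤ d → S (i + 1) ⊆ S i := by
  intro i hi hid x hx
  rw [hS (i + 1) (by omega) hid] at hx
  obtain ⟨C, hCQ, hactive, rfl⟩ := hx
  have hxavail : p (i + 1) C ∈ (P i ∩ C) \ Rc i C := hp (i + 1) (by omega) hid C hCQ hactive
  have hpropose : ((P (i - 1) ∩ C) \ Rc (i - 1) C).Nonempty → (C ∩ S i).Nonempty :=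
    fun hactive' => ⟨p i C, (hp i hi (by omega) C hCQ hactive').1.2,
      by rw [hS i hi (by omega)]; exact ⟨C, hCQ, hactive', rfl⟩⟩
  exact (hQ.1 C hCQ).diff_subset_proposed hpropose (hRc2 i hi (by omega) C hCQ)
    (hPi i hi (by omega)).le hxavail

/-- in the `d`-phase proposal process, the sets of proposed nodes are
nested: `S 1 ⊇ S 2 ⊇ … ⊇ S d`. -/
theorem stmt10 {V : Type*} [Fintype V] (G : SimpleGraph V)
    (Q : Set (Set V)) (d : ℕ) (hd : 1 ≤ d)
    (hQ : IsCliqueEdgeCover G Q)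
    (hdiv : ∀ v : V, {C ∈ Q | v ∈ C}.ncard ≤ d)
    (P S : ℕ → Set V) (Rc : ℕ → Set V → Set V) (p : ℕ → Set V → V)
    (hP0 : P 0 = Set.univ)
    (hRc0 : ∀ C ∈ Q, Rc 0 C = ∅)
    (hp : ∀ i, 1 ≤ i → i ≤ d → ∀ C ∈ Q,
      ((P (i - 1) ∩ C) \ Rc (i - 1) C).Nonempty →
        p i C ∈ (P (i - 1) ∩ C) \ Rc (i - 1) C)
    (hS : ∀ i, 1 ≤ i → i ≤ d →
      S i = {x : V | ∃ C ∈ Q, ((P (i - 1) ∩ C) \ Rc (i - 1) C).Nonempty ∧ p i C = x})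
    (hRc1 : ∀ i, 1 ≤ i → i ≤ d → ∀ C ∈ Q,
      ((P (i - 1) ∩ C) \ Rc (i - 1) C).Nonempty →
        Rc i C = Rc (i - 1) C ∪ {p i C})
    (hRc2 : ∀ i, 1 ≤ i → i ≤ d → ∀ C ∈ Q,
      ¬ ((P (i - 1) ∩ C) \ Rc (i - 1) C).Nonempty →
        Rc i C = Rc (i - 1) C)
    (hPi : ∀ i, 1 ≤ i → i ≤ d →
      P i = S i ∪ {v ∈ P (i - 1) | ∀ u : V, G.Adj v u → u ∉ S i}) :
    ∀ i, 1 ≤ i → i + 1 ≤ d → S (i + 1) ⊆ S i :=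
  stmt10_general G Q d hQ P S Rc p hp hS hRc2 hPi
end

section
/- Let G = (V,E) be a finite simple graph, let α ≥ 2, B ≥ 2 and L ≥ 1 be integers, and let c : V → {0,…,B−1}^L be a labeling such that any two distinct vertices u ≠ v with dist(u,v) ≤ α−1 satisfy c(u) ≠ c(v). Define R₀ = V and, for i = 1,…,L, define R_i from R_{i−1} as follows: let T_b = { v ∈ R_{i−1} : the i-th digit of c(v) equals b } for b = 0,…,B−1; set K₀ = T₀ and, for b = 1,…,B−1, K_b = { v ∈ T_b : every u ∈ K₀ ∪ … ∪ K_{b−1} satisfies dist(u,v) ≥ α }; and let R_i = K₀ ∪ … ∪ K_{B−1}. Then R_L is an (α, (α−1)·L)-ruling set of G: any two distinct vertices of R_L are at distance at least α in G, and every vertex of G is at distance at most (α−1)·L from some vertex of R_L. -/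
/-!
Each phase only thins out the current set. Within a phase two survivors with different digits are
at distance at least `α`, since the later digit class only keeps vertices far from all earlier ones;
two vertices at distance at most `α - 1` differ in some digit, and both survive the phase of that
digit, so they cannot both survive to the end. Conversely a vertex dropped in a phase has a survivor
of that phase within distance `α - 1`, so after `L` phases every vertex is within `(α - 1) L` of `R L`.
-/

open SimpleGraph

lemma ENat.le_natCast_sub_one_of_lt {x : ℕ∞} {n : ℕ} (h : x < n) : x ≤ ((n - 1 : ℕ) : ℕ∞) := by
  rw [ENat.natCast_sub, Nat.cast_one]
  exact ENat.le_sub_one_of_lt h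

/-- Phase `i` of the algorithm, with `S = R_{i-1}`, `d` the digit read in that phase, `K b = K_b`
and `T = R_i`. -/
structure IsSparsificationPhase {V : Type*} (G : SimpleGraph V) (α B : ℕ) (S : Set V)
    (d : V → ℕ) (K : ℕ → Set V) (T : Set V) : Prop where
  kept_zero : K 0 = {v ∈ S | d v = 0}
  kept_pos : ∀ b, 1 ≤ b → b ≤ B - 1 →
    K b = {v ∈ S | d v = b ∧ ∀ a < b, ∀ u ∈ K a, (α : ℕ∞) ≤ G.edist u v}
  eq_iUnion_kept : T = {v | ∃ b ≤ B - 1, v ∈ K b}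

namespace IsSparsificationPhase

variable {V : Type*} {G : SimpleGraph V} {α B : ℕ} {S T : Set V} {d : V → ℕ} {K : ℕ → Set V}

lemma mem_and_digit_eq_of_mem_kept (h : IsSparsificationPhase G α B S d K T) {b : ℕ}
    (hb : b ≤ B - 1) {v : V} (hv : v ∈ K b) : v ∈ S ∧ d v = b := by
  rcases Nat.eq_zero_or_pos b with rfl | hpos
  · rw [h.kept_zero] at hv
    exact hv
  · rw [h.kept_pos b hpos hb] at hv
    exact ⟨hv.1, hv.2.1⟩

lemma subset (h : IsSparsificationPhase G α B S d K T) : T ⊆ S := by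
  intro v hv
  rw [h.eq_iUnion_kept] at hv
  obtain ⟨b, hb, hvb⟩ := hv
  exact (h.mem_and_digit_eq_of_mem_kept hb hvb).1

lemma mem_kept_digit (h : IsSparsificationPhase G α B S d K T) {v : V} (hv : v ∈ T) :
    v ∈ K (d v) ∧ d v ≤ B - 1 := by
  rw [h.eq_iUnion_kept] at hv
  obtain ⟨b, hb, hvb⟩ := hv
  obtain rfl := (h.mem_and_digit_eq_of_mem_kept hb hvb).2
  exact ⟨hvb, hb⟩

lemma le_edist_of_digit_lt (h : IsSparsificationPhase G α B S d K T) {u v : V} (hu : u ∈ T)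
    (hv : v ∈ T) (hlt : d u < d v) : (α : ℕ∞) ≤ G.edist u v := by
  obtain ⟨hvK, hvB⟩ := h.mem_kept_digit hv
  rw [h.kept_pos (d v) (by omega) hvB] at hvK
  exact hvK.2.2 (d u) hlt u (h.mem_kept_digit hu).1

lemma le_edist_of_digit_ne (h : IsSparsificationPhase G α B S d K T) {u v : V} (hu : u ∈ T)
    (hv : v ∈ T) (hne : d u ≠ d v) : (α : ℕ∞) ≤ G.edist u v := by
  rcases Nat.lt_or_gt_of_ne hne with hlt | hgt
  · exact h.le_edist_of_digit_lt hu hv hlt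
  · rw [G.edist_comm]
    exact h.le_edist_of_digit_lt hv hu hgt

lemma exists_edist_le (h : IsSparsificationPhase G α B S d K T) {u : V} (hu : u ∈ S)
    (hdu : d u < B) : ∃ w ∈ T, G.edist u w ≤ ((α - 1 : ℕ) : ℕ∞) := by
  have hmem : ∀ {b}, b ≤ B - 1 → ∀ {w}, w ∈ K b → w ∈ T := fun hb _ hw => by
    rw [h.eq_iUnion_kept]
    exact ⟨_, hb, hw⟩
  by_cases hkept : u ∈ K (d u)
  · exact ⟨u, hmem (by omega) hkept, by simp⟩
  have hpos : 1 ≤ d u := by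
    by_contra! h0
    apply hkept
    rw [Nat.lt_one_iff.mp h0, h.kept_zero]
    exact ⟨hu, Nat.lt_one_iff.mp h0⟩
  rw [h.kept_pos (d u) hpos (by omega)] at hkept
  simp only [Set.mem_ofPred_eq, not_and, not_forall, not_le] at hkept
  obtain ⟨a, ha, w, hw, hwu⟩ := hkept hu trivial
  refine ⟨w, hmem (by omega) hw, ?_⟩
  rw [G.edist_comm]
  exact ENat.le_natCast_sub_one_of_lt hwu

end IsSparsificationPhase

section Phases

variable {V : Type*} {G : SimpleGraph V} {α B L : ℕ} {c : V → ℕ → ℕ} {R : ℕ → Set V}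
  {K : ℕ → ℕ → Set V}

lemma subset_of_isSparsificationPhase
    (hphase : ∀ i < L, IsSparsificationPhase G α B (R i) (c · i) (K (i + 1)) (R (i + 1)))
    {i j : ℕ} (hij : i ≤ j) (hj : j ≤ L) : R j ⊆ R i := by
  induction j, hij using Nat.le_induction with
  | base => exact subset_rfl
  | succ j _ ih => exact (hphase j hj).subset.trans (ih (by omega))

lemma le_edist_of_isSparsificationPhase
    (hphase : ∀ i < L, IsSparsificationPhase G α B (R i) (c · i) (K (i + 1)) (R (i + 1)))
    {u v : V} (hu : u ∈ R L) (hv : v ∈ R L) {i : ℕ} (hi : i < L) (hne : c u i ≠ c v i) :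
    (α : ℕ∞) ≤ G.edist u v :=
  (hphase i hi).le_edist_of_digit_ne (subset_of_isSparsificationPhase hphase hi le_rfl hu)
    (subset_of_isSparsificationPhase hphase hi le_rfl hv) hne

lemma exists_edist_le_of_isSparsificationPhase
    (hphase : ∀ i < L, IsSparsificationPhase G α B (R i) (c · i) (K (i + 1)) (R (i + 1)))
    (hcB : ∀ v : V, ∀ i < L, c v i < B) (hR0 : R 0 = Set.univ) :
    ∀ i ≤ L, ∀ v : V, ∃ u ∈ R i, G.edist v u ≤ (((α - 1) * i : ℕ) : ℕ∞) := by
  intro i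
  induction i with
  | zero => exact fun _ v => ⟨v, hR0 ▸ Set.mem_univ v, by simp⟩
  | succ i ih =>
    intro hi v
    obtain ⟨u, hu, hvu⟩ := ih (by omega) v
    obtain ⟨w, hw, huw⟩ := (hphase i hi).exists_edist_le hu (hcB u i hi)
    refine ⟨w, hw, ?_⟩
    calc G.edist v w ≤ G.edist v u + G.edist u w := G.edist_triangle
      _ ≤ (((α - 1) * i : ℕ) : ℕ∞) + ((α - 1 : ℕ) : ℕ∞) := add_le_add hvu huw
      _ = (((α - 1) * (i + 1) : ℕ) : ℕ∞) := by push_cast; ring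

end Phases

theorem stmt15_general {V : Type*} (G : SimpleGraph V) (α B L : ℕ)
    (c : V → ℕ → ℕ)
    (hcB : ∀ v : V, ∀ i < L, c v i < B)
    (hc : ∀ u v : V, u ≠ v → G.edist u v ≤ ((α - 1 : ℕ) : ℕ∞) →
      ∃ i < L, c u i ≠ c v i)
    (R : ℕ → Set V) (K : ℕ → ℕ → Set V)
    (hR0 : R 0 = Set.univ)
    (hK0 : ∀ i, 1 ≤ i → i ≤ L →
      K i 0 = {v ∈ R (i - 1) | c v (i - 1) = 0})
    (hKb : ∀ i, 1 ≤ i → i ≤ L → ∀ b, 1 ≤ b → b ≤ B - 1 →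
      K i b = {v ∈ R (i - 1) | c v (i - 1) = b ∧
        ∀ a < b, ∀ u ∈ K i a, (α : ℕ∞) ≤ G.edist u v})
    (hRi : ∀ i, 1 ≤ i → i ≤ L →
      R i = {v : V | ∃ b ≤ B - 1, v ∈ K i b}) :
    IsRulingSet G α ((α - 1) * L) (R L) := by
  have hphase : ∀ i < L,
      IsSparsificationPhase G α B (R i) (c · i) (K (i + 1)) (R (i + 1)) := fun i hi =>
    { kept_zero := by simpa using hK0 (i + 1) (by omega) hi
      kept_pos := by simpa using hKb (i + 1) (by omega) hi
      eq_iUnion_kept := hRi (i + 1) (by omega) hi }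
  refine ⟨fun u hu v hv huv => ?_, exists_edist_le_of_isSparsificationPhase hphase hcB hR0 L le_rfl⟩
  by_contra! hlt
  obtain ⟨i, hi, hne⟩ := hc u v huv (ENat.le_natCast_sub_one_of_lt hlt)
  exact hlt.not_ge (le_edist_of_isSparsificationPhase hphase hu hv hi hne)

/-- the digit-wise sparsification algorithm. The vertices carry labels
`c v : ℕ → ℕ` with digits `c v 0, …, c v (L-1)` in `{0, …, B-1}` such that vertices at
distance at most `α - 1` have distinct labels. Starting from `R 0 = V`, phase `i`
(for `i = 1, …, L`) splits `R (i-1)` according to digit `i - 1` into sets `T b`,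
keeps `K i 0 = T 0`, keeps from each `T b` the vertices at distance at least `α`
from all previously kept vertices, and sets `R i` to be the union of the kept sets.
The final set `R L` is an `(α, (α-1)·L)`-ruling set of `G`. -/
theorem stmt15 {V : Type*} [Fintype V] (G : SimpleGraph V) (α B L : ℕ)
    (hα : 2 ≤ α) (hB : 2 ≤ B) (hL : 1 ≤ L)
    (c : V → ℕ → ℕ)
    (hcB : ∀ v : V, ∀ i < L, c v i < B)
    (hc : ∀ u v : V, u ≠ v → G.edist u v ≤ ((α - 1 : ℕ) : ℕ∞) →
      ∃ i < L, c u i ≠ c v i)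
    (R : ℕ → Set V) (K : ℕ → ℕ → Set V)
    (hR0 : R 0 = Set.univ)
    (hK0 : ∀ i, 1 ≤ i → i ≤ L →
      K i 0 = {v ∈ R (i - 1) | c v (i - 1) = 0})
    (hKb : ∀ i, 1 ≤ i → i ≤ L → ∀ b, 1 ≤ b → b ≤ B - 1 →
      K i b = {v ∈ R (i - 1) | c v (i - 1) = b ∧
        ∀ a < b, ∀ u ∈ K i a, (α : ℕ∞) ≤ G.edist u v})
    (hRi : ∀ i, 1 ≤ i → i ≤ L →
      R i = {v : V | ∃ b ≤ B - 1, v ∈ K i b}) :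
    IsRulingSet G α ((α - 1) * L) (R L) :=
  stmt15_general G α B L c hcB hc R K hR0 hK0 hKb hRi
end

section
/- Let G = (V,E) be a finite simple graph, let F be a (2,2)-edge-kernel of G, and let M ⊆ F be a maximal matching of the spanning subgraph H = (V,F), i.e., a set of pairwise non-adjacent edges of F such that every edge of F either lies in M or shares an endpoint with some edge of M. Then M is a (2,3)-ruling edge set of G. -/
/-!
Edges of a matching share no endpoint, so they are not adjacent in the line graph. By
maximality every edge of `F` lies within line-graph distance one of `M`, so the triangle
inequality turns distance at most `r` from `F` into distance at most `r + 1` from `M`.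
-/

open SimpleGraph

lemma edistE_le_one_of_mem_of_mem {V : Type*} {G : SimpleGraph V} {e f : Sym2 V}
    (he : e ∈ G.edgeSet) (hf : f ∈ G.edgeSet) {v : V} (hve : v ∈ e) (hvf : v ∈ f) :
    edistE G e f ≤ 1 := by
  rcases eq_or_ne e f with rfl | hne
  · simp [edistE]
  · exact edist_le_one_iff_adj_or_eq.mpr (.inl ⟨hne, he, hf, v, hve, hvf⟩)

lemma two_le_edistE_of_not_exists_mem {V : Type*} {G : SimpleGraph V} {e f : Sym2 V}
    (hne : e ≠ f) (hdisj : ¬ ∃ v : V, v ∈ e ∧ v ∈ f) : 2 ≤ edistE G e f := by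
  have hlt : 1 < edistE G e f := by
    rw [← not_le, edistE, edist_le_one_iff_adj_or_eq]
    rintro (⟨-, -, -, hshare⟩ | rfl)
    exacts [hdisj hshare, hne rfl]
  exact Order.add_one_le_of_lt hlt

section MaximalMatching

variable {V : Type*} {G : SimpleGraph V} {F M : Set (Sym2 V)}

lemma exists_mem_edistE_le_add_one_of_maximal {r : ℕ} (hFE : F ⊆ G.edgeSet) (hMF : M ⊆ F)
    (hcov : ∀ e ∈ G.edgeSet, ∃ f ∈ F, edistE G e f ≤ (r : ℕ∞))
    (hmax : ∀ e ∈ F, e ∈ M ∨ ∃ f ∈ M, ∃ v : V, v ∈ e ∧ v ∈ f)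
    {e : Sym2 V} (he : e ∈ G.edgeSet) : ∃ m ∈ M, edistE G e m ≤ ((r + 1 : ℕ) : ℕ∞) := by
  obtain ⟨f, hfF, hef⟩ := hcov e he
  rcases hmax f hfF with hfM | ⟨m, hmM, v, hvf, hvm⟩
  · exact ⟨f, hfM, hef.trans (by norm_num)⟩
  · refine ⟨m, hmM, ?_⟩
    calc edistE G e m ≤ edistE G e f + edistE G f m := SimpleGraph.edist_triangle
      _ ≤ r + 1 := add_le_add hef (edistE_le_one_of_mem_of_mem (hFE hfF) (hFE (hMF hmM)) hvf hvm)
      _ = ((r + 1 : ℕ) : ℕ∞) := by norm_cast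

theorem isRulingEdgeSet_of_maximal_matching {r : ℕ} (hFE : F ⊆ G.edgeSet) (hMF : M ⊆ F)
    (hcov : ∀ e ∈ G.edgeSet, ∃ f ∈ F, edistE G e f ≤ (r : ℕ∞))
    (hmatch : ∀ e ∈ M, ∀ f ∈ M, e ≠ f → ¬ ∃ v : V, v ∈ e ∧ v ∈ f)
    (hmax : ∀ e ∈ F, e ∈ M ∨ ∃ f ∈ M, ∃ v : V, v ∈ e ∧ v ∈ f) :
    IsRulingEdgeSet G 2 (r + 1) M :=
  ⟨hMF.trans hFE,
    fun e he f hf hne => two_le_edistE_of_not_exists_mem hne (hmatch e he f hf hne),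
    fun _ he => exists_mem_edistE_le_add_one_of_maximal hFE hMF hcov hmax he⟩

end MaximalMatching

theorem stmt16_general {V : Type*} (G : SimpleGraph V)
    (F : Set (Sym2 V)) (hF : IsEdgeKernel G 2 2 F)
    (M : Set (Sym2 V)) (hMF : M ⊆ F)
    (hmatch : ∀ e ∈ M, ∀ f ∈ M, e ≠ f → ¬ ∃ v : V, v ∈ e ∧ v ∈ f)
    (hmax : ∀ e ∈ F, e ∈ M ∨ ∃ f ∈ M, ∃ v : V, v ∈ e ∧ v ∈ f) :
    IsRulingEdgeSet G 2 3 M := by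
  obtain ⟨hFE, -, hcov⟩ := hF
  exact isRulingEdgeSet_of_maximal_matching hFE hMF hcov hmatch hmax

/-- a maximal matching of the spanning subgraph on a `(2,2)`-edge-kernel
is a `(2,3)`-ruling edge set of the whole graph. -/
theorem stmt16 {V : Type*} [Fintype V] (G : SimpleGraph V)
    (F : Set (Sym2 V)) (hF : IsEdgeKernel G 2 2 F)
    (M : Set (Sym2 V)) (hMF : M ⊆ F)
    (hmatch : ∀ e ∈ M, ∀ f ∈ M, e ≠ f → ¬ ∃ v : V, v ∈ e ∧ v ∈ f)
    (hmax : ∀ e ∈ F, e ∈ M ∨ ∃ f ∈ M, ∃ v : V, v ∈ e ∧ v ∈ f) :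
    IsRulingEdgeSet G 2 3 M :=
  stmt16_general G F hF M hMF hmatch hmax
end
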